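/- Let f : ℝ³ → ℝ be twice continuously differentiable, let q, β ∈ ℝ, and let X : ℝ → ℝ³ be twice differentiable with ∇f(X(t)) ≠ 0 for all t, satisfying the magnetic geodesic equation X''(t) = −(Hess f_{X(t)}(X'(t), X'(t)) / ‖∇f(X(t))‖²) • ∇f(X(t)) + q • (X'(t) × (β • n̂(X(t)))) for all t ∈ ℝ. If ⟨∇f(X(0)), X'(0)⟩ = 0, then ‖X'(t)‖ = ‖X'(0)‖ for all t ∈ ℝ; that is, magnetic geodesics travel at constant speed. -/

import Mathlib

/-- Cross product on `ℝ³` (as `EuclideanSpace ℝ (Fin 3)`). -/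
noncomputable def cross3 (a b : EuclideanSpace ℝ (Fin 3)) : EuclideanSpace ℝ (Fin 3) :=
  WithLp.toLp 2 (crossProduct a b)

/-- The Hessian of `f` at `x` as a bilinear form: `⟪D(∇f)(x)[u], v⟫`. -/
noncomputable def hessian (f : EuclideanSpace ℝ (Fin 3) → ℝ)
    (x u v : EuclideanSpace ℝ (Fin 3)) : ℝ :=
  inner ℝ (fderiv ℝ (gradient f) x u) v

/-- The unit normal field `n̂(x) = ∇f(x)/‖∇f(x)‖` of level surfaces of `f`. -/
noncomputable def nhat (f : EuclideanSpace ℝ (Fin 3) → ℝ)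
    (x : EuclideanSpace ℝ (Fin 3)) : EuclideanSpace ℝ (Fin 3) :=
  ‖gradient f x‖⁻¹ • gradient f x

/-!
The normal component of the acceleration is exactly the one that keeps `⟪∇f(X), X'⟫` constant:
its derivative is `Hess f_X(X', X') + ⟪∇f(X), X''⟫`, and the magnetic term is orthogonal to
`∇f(X)`. So `X'` stays tangent to the level sets, and then `X''` is orthogonal to `X'`
(the magnetic term being orthogonal to `X'` as well), so `‖X'‖²` is constant.
-/

open scoped RealInnerProductSpace

section InnerProductSpace

variable {E : Type*} [NormedAddCommGroup E] [InnerProductSpace ℝ E]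

theorem ContDiff.gradient [CompleteSpace E] {f : E → ℝ} {n : WithTop ℕ∞}
    (hf : ContDiff ℝ (n + 1) f) : ContDiff ℝ n (gradient f) :=
  (InnerProductSpace.toDual ℝ E).symm.contDiff.comp (hf.fderiv_right le_rfl)

theorem inner_eq_inner_zero_of_hasDerivAt {u v u' v' : ℝ → E}
    (hu : ∀ t, HasDerivAt u (u' t) t) (hv : ∀ t, HasDerivAt v (v' t) t)
    (h : ∀ t, ⟪u t, v' t⟫ + ⟪u' t, v t⟫ = 0) (t : ℝ) :
    ⟪u t, v t⟫ = ⟪u 0, v 0⟫ := by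
  have hd : ∀ s, HasDerivAt (fun s => ⟪u s, v s⟫) 0 s := fun s => h s ▸ (hu s).inner ℝ (hv s)
  exact is_const_of_deriv_eq_zero (fun s => (hd s).differentiableAt) (fun s => (hd s).deriv) t 0

theorem norm_eq_norm_zero_of_inner_deriv_eq_zero {v v' : ℝ → E}
    (hv : ∀ t, HasDerivAt v (v' t) t) (h : ∀ t, ⟪v t, v' t⟫ = 0) (t : ℝ) :
    ‖v t‖ = ‖v 0‖ := by
  have hsq := inner_eq_inner_zero_of_hasDerivAt hv hv
    (fun s => by rw [real_inner_comm (v s), h s, add_zero]) t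
  rw [real_inner_self_eq_norm_sq, real_inner_self_eq_norm_sq] at hsq
  exact (pow_left_inj₀ (norm_nonneg _) (norm_nonneg _) two_ne_zero).1 hsq

variable {n n' v a F : ℝ → E}

theorem inner_eq_zero_of_normal_reaction (hn : ∀ t, HasDerivAt n (n' t) t)
    (hv : ∀ t, HasDerivAt v (a t) t) (hn0 : ∀ t, n t ≠ 0)
    (ha : ∀ t, a t = -(⟪n' t, v t⟫ / ‖n t‖ ^ 2) • n t + F t) (hF : ∀ t, ⟪n t, F t⟫ = 0)
    (h0 : ⟪n 0, v 0⟫ = 0) (t : ℝ) : ⟪n t, v t⟫ = 0 := by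
  refine (inner_eq_inner_zero_of_hasDerivAt hn hv (fun s => ?_) t).trans h0
  have hns : ‖n s‖ ^ 2 ≠ 0 := pow_ne_zero 2 (norm_ne_zero_iff.2 (hn0 s))
  rw [ha s, inner_add_right, hF s, add_zero, real_inner_smul_right, real_inner_self_eq_norm_sq,
    neg_mul, div_mul_cancel₀ _ hns, neg_add_cancel]

theorem norm_eq_norm_zero_of_normal_reaction (hn : ∀ t, HasDerivAt n (n' t) t)
    (hv : ∀ t, HasDerivAt v (a t) t) (hn0 : ∀ t, n t ≠ 0)
    (ha : ∀ t, a t = -(⟪n' t, v t⟫ / ‖n t‖ ^ 2) • n t + F t) (hFn : ∀ t, ⟪n t, F t⟫ = 0)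
    (hFv : ∀ t, ⟪v t, F t⟫ = 0) (h0 : ⟪n 0, v 0⟫ = 0) (t : ℝ) : ‖v t‖ = ‖v 0‖ := by
  refine norm_eq_norm_zero_of_inner_deriv_eq_zero hv (fun s => ?_) t
  rw [ha s, inner_add_right, hFv s, add_zero, real_inner_smul_right, real_inner_comm (n s),
    inner_eq_zero_of_normal_reaction hn hv hn0 ha hFn h0 s, mul_zero]

end InnerProductSpace

theorem cross3_smul_right (a b : EuclideanSpace ℝ (Fin 3)) (c : ℝ) :
    cross3 a (c • b) = c • cross3 a b := by
  simp [cross3, map_smul]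

theorem inner_cross3_self_left (a b : EuclideanSpace ℝ (Fin 3)) : ⟪a, cross3 a b⟫ = 0 := by
  simpa [cross3, PiLp.inner_apply, dotProduct, mul_comm] using dot_self_cross (⇑a) (⇑b)

theorem inner_cross3_self_right (a b : EuclideanSpace ℝ (Fin 3)) : ⟪b, cross3 a b⟫ = 0 := by
  simpa [cross3, PiLp.inner_apply, dotProduct, mul_comm] using dot_cross_self (⇑a) (⇑b)

theorem inner_gradient_cross3_nhat (f : EuclideanSpace ℝ (Fin 3) → ℝ)
    (x v : EuclideanSpace ℝ (Fin 3)) (c : ℝ) : ⟪gradient f x, cross3 v (c • nhat f x)⟫ = 0 := by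
  rw [nhat, smul_smul, cross3_smul_right, real_inner_smul_right, inner_cross3_self_right, mul_zero]

/-- Magnetic geodesics travel at constant speed. -/
theorem magnetic_geodesic_constant_speed
    (f : EuclideanSpace ℝ (Fin 3) → ℝ) (hf : ContDiff ℝ 2 f) (q β : ℝ)
    (X X' X'' : ℝ → EuclideanSpace ℝ (Fin 3))
    (hX : ∀ t, HasDerivAt X (X' t) t)
    (hX' : ∀ t, HasDerivAt X' (X'' t) t)
    (hgrad : ∀ t, gradient f (X t) ≠ 0)
    (heqn : ∀ t, X'' t
      = -(hessian f (X t) (X' t) (X' t) / ‖gradient f (X t)‖ ^ 2) • gradient f (X t)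
        + q • cross3 (X' t) (β • nhat f (X t)))
    (h0' : (inner ℝ (gradient f (X 0)) (X' 0) : ℝ) = 0) :
    ∀ t, ‖X' t‖ = ‖X' 0‖ := by
  have hgradX : ∀ t, HasDerivAt (fun s => gradient f (X s))
      (fderiv ℝ (gradient f) (X t) (X' t)) t := fun t =>
    ((hf.gradient.differentiable one_ne_zero (X t)).hasFDerivAt).comp_hasDerivAt t (hX t)
  refine norm_eq_norm_zero_of_normal_reaction hgradX hX' hgrad heqn (fun t => ?_) (fun t => ?_) h0'
  · rw [real_inner_smul_right, inner_gradient_cross3_nhat, mul_zero]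
  · rw [real_inner_smul_right, inner_cross3_self_left, mul_zero]
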